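/- arXiv:2302.09456 — 4 statements merged into one kernel-verified Lean document; each statement's English description precedes it below -/
import Mathlib

section
/- Let H > 0, τ ∈ (0,1), and let f, f' ∈ Δ([0,H]) be two probability densities on [0,H]. Define CVaR_τ(f) := max_{b∈[0,H]} ( b − (1/τ) E_{z∼f} max{b − z, 0} ). Then CVaR_τ(f) − CVaR_τ(f') ≤ (2H/τ) · d_tv(f, f'). -/
open MeasureTheory

/-- Total variation distance between two measures. -/
noncomputable def dtv {α : Type*} [MeasurableSpace α] (P Q : Measure α) : ℝ :=
  ⨆ s : {s : Set α // MeasurableSet s}, |(P s.1).toReal - (Q s.1).toReal|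

/-- Conditional value at risk at level `τ` of a distribution `f` on `[0,H]`:
`CVaR_τ(f) = max_{b∈[0,H]} ( b − (1/τ) E_{z∼f} max{b − z, 0} )`. -/
noncomputable def cvar (τ H : ℝ) (f : Measure ℝ) : ℝ :=
  sSup {v : ℝ | ∃ b ∈ Set.Icc (0 : ℝ) H, v = b - (1 / τ) * ∫ z, max (b - z) 0 ∂f}

lemma dtv_nonneg {α : Type*} [MeasurableSpace α] (P Q : Measure α) : 0 ≤ dtv P Q :=
  Real.iSup_nonneg fun _ => abs_nonneg _

lemma dtv_comm {α : Type*} [MeasurableSpace α] (P Q : Measure α) : dtv P Q = dtv Q P := by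
  unfold dtv; congr 1; funext s; rw [abs_sub_comm]

lemma dtv_bdd {α : Type*} [MeasurableSpace α] (P Q : Measure α)
    [IsProbabilityMeasure P] [IsProbabilityMeasure Q] :
    BddAbove (Set.range fun s : {s : Set α // MeasurableSet s} =>
      |(P s.1).toReal - (Q s.1).toReal|) := by
  refine ⟨1, ?_⟩
  rintro x ⟨s, rfl⟩
  rw [abs_sub_le_iff]
  constructor <;> nlinarith [ENNReal.toReal_nonneg (a := P s.1), ENNReal.toReal_nonneg (a := Q s.1),
    ENNReal.toReal_le_of_le_ofReal (by norm_num) (show P s.1 ≤ ENNReal.ofReal 1 by simpa using prob_le_one),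
    ENNReal.toReal_le_of_le_ofReal (by norm_num) (show Q s.1 ≤ ENNReal.ofReal 1 by simpa using prob_le_one)]

lemma abs_le_dtv {α : Type*} [MeasurableSpace α] (P Q : Measure α)
    [IsProbabilityMeasure P] [IsProbabilityMeasure Q] {s : Set α} (hs : MeasurableSet s) :
    |(P s).toReal - (Q s).toReal| ≤ dtv P Q :=
  le_ciSup (dtv_bdd P Q) ⟨s, hs⟩

/-- Key bound: difference of expectations of `max (b - ·) 0` is at most `b * dtv`. -/
lemma integral_diff_le (H b : ℝ) (hb : b ∈ Set.Icc (0:ℝ) H)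
    (μ ν : Measure ℝ) [IsProbabilityMeasure μ] [IsProbabilityMeasure ν]
    (hμ : μ (Set.Icc (0:ℝ) H)ᶜ = 0) (hν : ν (Set.Icc (0:ℝ) H)ᶜ = 0) :
    (∫ z, max (b - z) 0 ∂μ) - (∫ z, max (b - z) 0 ∂ν) ≤ b * dtv μ ν := by
  obtain ⟨hb0, hbH⟩ := hb
  set g : ℝ → ℝ := fun z => max (b - z) 0 with hgdef
  have hgmeas : Measurable g := (measurable_const.sub measurable_id).max measurable_const
  have hgnn : ∀ z, 0 ≤ g z := fun z => le_max_right _ _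
  -- integrability of g
  have hint : ∀ (ρ : Measure ℝ) [IsProbabilityMeasure ρ], ρ (Set.Icc (0:ℝ) H)ᶜ = 0 →
      Integrable g ρ := by
    intro ρ _ hρ
    have hae : ∀ᵐ z ∂ρ, z ∈ Set.Icc (0:ℝ) H := by
      rw [MeasureTheory.ae_iff]
      exact hρ
    refine Integrable.mono' (integrable_const b) hgmeas.aestronglyMeasurable ?_
    filter_upwards [hae] with z hz
    rw [Real.norm_eq_abs, abs_of_nonneg (hgnn z)]
    exact max_le (by linarith [hz.1]) hb0
  have hμint := hint μ hμ
  have hνint := hint ν hν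
  -- layer cake
  have hμeq := hμint.integral_eq_integral_meas_lt (Filter.Eventually.of_forall hgnn)
  have hνeq := hνint.integral_eq_integral_meas_lt (Filter.Eventually.of_forall hgnn)
  set F : ℝ → ℝ := fun t => (μ {a | t < g a}).toReal with hF
  set G : ℝ → ℝ := fun t => (ν {a | t < g a}).toReal with hG
  -- tails vanish beyond b
  have hvanish : ∀ (ρ : Measure ℝ), ρ (Set.Icc (0:ℝ) H)ᶜ = 0 → ∀ t, b < t →
      ρ {a | t < g a} = 0 := by
    intro ρ hρ t ht
    refine measure_mono_null ?_ hρ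
    intro a ha
    simp only [Set.mem_compl_iff, Set.mem_Icc, not_and_or, not_le]
    by_contra hcon
    push_neg at hcon
    have : g a ≤ b := max_le (by linarith [hcon.1]) hb0
    exact absurd (Set.mem_setOf_eq ▸ ha) (by simp only [Set.mem_setOf_eq] at ha; linarith)
  -- restrict integrals to Ioc 0 b
  have hrestrict : ∀ (ρ : Measure ℝ), ρ (Set.Icc (0:ℝ) H)ᶜ = 0 →
      (∫ t in Set.Ioi (0:ℝ), (ρ {a | t < g a}).toReal)
        = ∫ t in Set.Ioc (0:ℝ) b, (ρ {a | t < g a}).toReal := by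
    intro ρ hρ
    have h1 : ∀ t ∈ Set.Ioi (0:ℝ), (ρ {a | t < g a}).toReal
        = (Set.Ioc (0:ℝ) b).indicator (fun t => (ρ {a | t < g a}).toReal) t := by
      intro t ht
      by_cases htb : t ≤ b
      · rw [Set.indicator_of_mem (Set.mem_Ioc.mpr ⟨Set.mem_Ioi.mp ht, htb⟩)]
      · rw [Set.indicator_of_notMem (fun hmem => htb hmem.2), hvanish ρ hρ t (not_le.mp htb)]
        simp
    rw [setIntegral_congr_fun measurableSet_Ioi h1, setIntegral_indicator measurableSet_Ioc,
      Set.inter_eq_self_of_subset_right Set.Ioc_subset_Ioi_self]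
  simp only [Measure.real] at hμeq hνeq
  rw [hμeq, hνeq, hrestrict μ hμ, hrestrict ν hν]
  -- integrability of F, G on Ioc 0 b
  have hbound : ∀ (ρ : Measure ℝ) [IsProbabilityMeasure ρ], ∀ t, (ρ {a | t < g a}).toReal ≤ 1 := by
    intro ρ _ t
    exact ENNReal.toReal_le_of_le_ofReal (by norm_num) (by simpa using prob_le_one)
  have hintF : ∀ (ρ : Measure ℝ) [IsProbabilityMeasure ρ],
      IntegrableOn (fun t => (ρ {a | t < g a}).toReal) (Set.Ioc (0:ℝ) b) := by
    intro ρ _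
    have hanti : Antitone (fun t => (ρ {a | t < g a}).toReal) := by
      intro t t' htt'
      exact ENNReal.toReal_le_toReal (measure_ne_top _ _) (measure_ne_top _ _) |>.mpr
        (measure_mono (fun a ha => lt_of_le_of_lt htt' ha))
    refine Integrable.mono' (integrable_const 1) hanti.measurable.aestronglyMeasurable ?_
    exact Filter.Eventually.of_forall fun t => by
      rw [Real.norm_eq_abs, abs_of_nonneg ENNReal.toReal_nonneg]; exact hbound ρ t
  rw [← integral_sub (hintF μ) (hintF ν)]
  have hpt : ∀ t ∈ Set.Ioc (0:ℝ) b,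
      (μ {a | t < g a}).toReal - (ν {a | t < g a}).toReal ≤ dtv μ ν := by
    intro t _
    exact le_trans (le_abs_self _)
      (abs_le_dtv μ ν (measurableSet_lt measurable_const hgmeas))
  calc (∫ t in Set.Ioc (0:ℝ) b, ((μ {a | t < g a}).toReal - (ν {a | t < g a}).toReal))
      ≤ ∫ _t in Set.Ioc (0:ℝ) b, dtv μ ν :=
        setIntegral_mono_on ((hintF μ).sub (hintF ν)) ((integrableOn_const_iff).mpr (Or.inr (by
          rw [Real.volume_Ioc]; exact ENNReal.ofReal_lt_top))) measurableSet_Ioc hpt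
    _ = b * dtv μ ν := by
        rw [setIntegral_const, Real.volume_real_Ioc_of_le hb0, smul_eq_mul]
        ring

/-- **Lemma A.1.** CVaR is `(2H/τ)`-Lipschitz with respect to total variation distance:
for any two distributions `f, f'` on `[0,H]`,
`CVaR_τ(f) − CVaR_τ(f') ≤ (2H/τ) · d_tv(f, f')`. -/
theorem cvar_lipschitz_tv (H τ : ℝ) (hH : 0 < H) (hτ : τ ∈ Set.Ioo (0 : ℝ) 1)
    (f f' : Measure ℝ) [IsProbabilityMeasure f] [IsProbabilityMeasure f']
    (hf : f (Set.Icc (0 : ℝ) H)ᶜ = 0) (hf' : f' (Set.Icc (0 : ℝ) H)ᶜ = 0) :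
    cvar τ H f - cvar τ H f' ≤ (2 * H / τ) * dtv f f' := by
  obtain ⟨hτ0, hτ1⟩ := hτ
  have hdtv := dtv_nonneg f f'
  -- the set for f'
  set S' := {v : ℝ | ∃ b ∈ Set.Icc (0 : ℝ) H, v = b - (1 / τ) * ∫ z, max (b - z) 0 ∂f'} with hS'
  have hbdd : BddAbove S' := by
    refine ⟨H, ?_⟩
    rintro v ⟨b, hb, rfl⟩
    have : 0 ≤ ∫ z, max (b - z) 0 ∂f' :=
      integral_nonneg fun z => le_max_right _ _
    have h1τ : 0 ≤ 1 / τ := by positivity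
    nlinarith [hb.2]
  have hmem0 : (0:ℝ) ∈ S' := by
    refine ⟨0, ⟨le_refl 0, le_of_lt hH⟩, ?_⟩
    have : (∫ z, max ((0:ℝ) - z) 0 ∂f') = 0 := by
      have hae : ∀ᵐ z ∂f', z ∈ Set.Icc (0:ℝ) H := by
        rw [MeasureTheory.ae_iff]; exact hf'
      have hgmeas : Measurable (fun z : ℝ => max ((0:ℝ) - z) 0) :=
        (measurable_const.sub measurable_id).max measurable_const
      have hgint : Integrable (fun z : ℝ => max ((0:ℝ) - z) 0) f' := by
        refine Integrable.mono' (integrable_const (0:ℝ)) hgmeas.aestronglyMeasurable ?_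
        filter_upwards [hae] with z hz
        rw [Real.norm_eq_abs, abs_of_nonneg (le_max_right _ _)]
        exact max_le (by linarith [hz.1]) le_rfl
      refine (integral_eq_zero_iff_of_nonneg (fun z => le_max_right _ _) hgint).mpr ?_
      filter_upwards [hae] with z hz
      simp only [Pi.zero_apply]
      rw [max_eq_right (by linarith [hz.1] : (0:ℝ) - z ≤ 0)]
    rw [this]; ring
  have hcvar' : 0 ≤ cvar τ H f' := le_csSup hbdd hmem0
  rw [sub_le_iff_le_add]
  refine Real.sSup_le ?_ (by positivity)
  rintro v ⟨b, hb, rfl⟩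
  -- bound
  have hkey : (∫ z, max (b - z) 0 ∂f') - (∫ z, max (b - z) 0 ∂f) ≤ b * dtv f' f :=
    integral_diff_le H b hb f' f hf' hf
  rw [dtv_comm] at hkey
  have hmem : b - (1 / τ) * ∫ z, max (b - z) 0 ∂f' ∈ S' := ⟨b, hb, rfl⟩
  have hle : b - (1 / τ) * ∫ z, max (b - z) 0 ∂f' ≤ cvar τ H f' := le_csSup hbdd hmem
  have h1τ : 0 < 1 / τ := by positivity
  have : b - (1 / τ) * ∫ z, max (b - z) 0 ∂f
      ≤ (b - (1 / τ) * ∫ z, max (b - z) 0 ∂f') + (1/τ) * (b * dtv f f') := by nlinarith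
  refine le_trans this ?_
  have hbH : b * dtv f f' ≤ H * dtv f f' := by nlinarith [hb.2]
  have : (1/τ) * (b * dtv f f') ≤ (2 * H / τ) * dtv f f' := by
    have h2 : b * dtv f f' ≤ 2 * H * dtv f f' := by nlinarith [hb.2]
    calc (1/τ) * (b * dtv f f') = (b * dtv f f') / τ := by ring
      _ ≤ (2 * H * dtv f f') / τ := by gcongr
      _ = (2 * H / τ) * dtv f f' := by ring
  linarith
end

section
/- For all real numbers x, a, b: exp(−(x−a)²) − exp(−(x−b)²) ≤ √(2/e) · |a − b|. -/
lemma key_bound (u : ℝ) : |Real.exp (-u ^ 2) * (2 * u)| ≤ Real.sqrt (2 / Real.exp 1) := by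
  have h0 : (Real.exp (-u ^ 2) * (2 * u)) ^ 2 ≤ 2 / Real.exp 1 := by
    have ht : (2 * u ^ 2) ≤ Real.exp (2 * u ^ 2 - 1) := by
      have := Real.add_one_le_exp (2 * u ^ 2 - 1)
      linarith
    have hexp : Real.exp (-u ^ 2) ^ 2 = Real.exp (-(2 * u ^ 2)) := by
      rw [← Real.exp_nat_mul]; ring_nf
    have hpos : (0:ℝ) < Real.exp (2 * u ^ 2) := Real.exp_pos _
    have he1 : (0:ℝ) < Real.exp 1 := Real.exp_pos 1
    rw [mul_pow, hexp, Real.exp_neg, inv_mul_eq_div, div_le_div_iff₀ hpos he1]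
    have hmul : Real.exp (2 * u ^ 2 - 1) * Real.exp 1 = Real.exp (2 * u ^ 2) := by
      rw [← Real.exp_add]; ring_nf
    calc (2 * u) ^ 2 * Real.exp 1 = (2 * u ^ 2) * Real.exp 1 * 2 := by ring
      _ ≤ Real.exp (2 * u ^ 2 - 1) * Real.exp 1 * 2 := by nlinarith
      _ = 2 * Real.exp (2 * u ^ 2) := by rw [hmul]; ring
  calc |Real.exp (-u ^ 2) * (2 * u)| = Real.sqrt ((Real.exp (-u ^ 2) * (2 * u)) ^ 2) := by
        rw [Real.sqrt_sq_eq_abs]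
    _ ≤ Real.sqrt (2 / Real.exp 1) := Real.sqrt_le_sqrt h0

/-- **Lemma B.5.** For all real numbers `x, a, b`:
`exp(−(x−a)²) − exp(−(x−b)²) ≤ √(2/e) · |a − b|`. -/
theorem exp_neg_sq_diff_le (x a b : ℝ) :
    Real.exp (-(x - a) ^ 2) - Real.exp (-(x - b) ^ 2)
      ≤ Real.sqrt (2 / Real.exp 1) * |a - b| := by
  set f : ℝ → ℝ := fun t => Real.exp (-(x - t) ^ 2) with hf
  have hderiv : ∀ t : ℝ, HasDerivAt f (Real.exp (-(x - t) ^ 2) * (2 * (x - t))) t := by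
    intro t
    have h1 : HasDerivAt (fun t : ℝ => x - t) (-1) t := (hasDerivAt_id t).const_sub x
    have h2 : HasDerivAt (fun t : ℝ => -(x - t) ^ 2) (2 * (x - t)) t := by
      have := ((h1.pow 2).neg)
      exact this.congr_deriv (by norm_num)
    exact h2.exp
  have hlip : LipschitzWith ⟨Real.sqrt (2 / Real.exp 1), Real.sqrt_nonneg _⟩ f := by
    apply lipschitzWith_of_nnnorm_deriv_le (fun t => (hderiv t).differentiableAt)
    intro t
    have := key_bound (x - t)
    rw [(hderiv t).deriv]
    apply NNReal.coe_le_coe.1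
    simp only [coe_nnnorm, Real.norm_eq_abs, NNReal.coe_mk]
    exact this
  have := hlip.dist_le_mul a b
  rw [Real.dist_eq, Real.dist_eq] at this
  calc f a - f b ≤ |f a - f b| := le_abs_self _
    _ ≤ Real.sqrt (2 / Real.exp 1) * |a - b| := this
end

section
/- Let 𝒩(x | μ, σ²) = (1/(σ√(2π))) exp(−(x−μ)²/(2σ²)) denote the Gaussian density. Then for any μ₁, μ₂ ∈ ℝ and any σ > 0: sup_{x∈ℝ} ( 𝒩(x | μ₁, σ²) − 𝒩(x | μ₂, σ²) ) ≤ |μ₁ − μ₂| / (σ² √(2πe)). -/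
/-- The one-dimensional Gaussian density with mean `μ` and standard deviation `σ`:
`𝒩(x | μ, σ²) = (1/(σ√(2π))) exp(−(x−μ)²/(2σ²))`. -/
noncomputable def gaussianDensity (μ σ x : ℝ) : ℝ :=
  (1 / (σ * Real.sqrt (2 * Real.pi))) * Real.exp (-(x - μ) ^ 2 / (2 * σ ^ 2))

lemma gauss_lip (a b : ℝ) :
    Real.exp (-a ^ 2 / 2) - Real.exp (-b ^ 2 / 2) ≤ Real.exp (-(1:ℝ)/2) * |a - b| := by
  have key : ‖Real.exp (-a ^ 2 / 2) - Real.exp (-b ^ 2 / 2)‖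
      ≤ Real.exp (-(1:ℝ)/2) * ‖a - b‖ := by
    have := Convex.norm_image_sub_le_of_norm_hasDerivWithin_le
      (f := fun t : ℝ => Real.exp (-t ^ 2 / 2))
      (f' := fun t : ℝ => Real.exp (-t ^ 2 / 2) * (-t))
      (s := Set.univ) (C := Real.exp (-(1:ℝ)/2))
      (fun t _ => by
        have h1 : HasDerivAt (fun t : ℝ => -t ^ 2 / 2) (-t) t := by
          have h := (((hasDerivAt_pow 2 t).neg).div_const 2)
          norm_num at h
          refine h.congr_deriv ?_
          ring
        exact (h1.exp).hasDerivWithinAt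
      )
      (fun t _ => by
        have ht : |t| ≤ Real.exp ((t ^ 2 - 1) / 2) := by
          have := Real.add_one_le_exp ((t ^ 2 - 1) / 2)
          nlinarith [sq_abs t, sq_nonneg (|t| - 1), abs_nonneg t]
        have hpos := Real.exp_pos (-t ^ 2 / 2)
        rw [Real.norm_eq_abs, abs_mul, abs_of_pos hpos, abs_neg]
        calc Real.exp (-t ^ 2 / 2) * |t|
            ≤ Real.exp (-t ^ 2 / 2) * Real.exp ((t ^ 2 - 1) / 2) := by
              exact mul_le_mul_of_nonneg_left ht hpos.le
          _ = Real.exp (-(1:ℝ)/2) := by rw [← Real.exp_add]; ring_nf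
      )
      convex_univ (Set.mem_univ b) (Set.mem_univ a)
    simpa using this
  calc Real.exp (-a ^ 2 / 2) - Real.exp (-b ^ 2 / 2)
      ≤ |Real.exp (-a ^ 2 / 2) - Real.exp (-b ^ 2 / 2)| := le_abs_self _
    _ ≤ Real.exp (-(1:ℝ)/2) * |a - b| := by simpa [Real.norm_eq_abs] using key

/-- **Lemma B.6.** For any `μ₁, μ₂ ∈ ℝ` and `σ > 0`:
`sup_x (𝒩(x|μ₁,σ²) − 𝒩(x|μ₂,σ²)) ≤ |μ₁ − μ₂| / (σ²√(2πe))`,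
stated pointwise (equivalently, as a bound on the supremum). -/
theorem gaussian_density_diff_le (μ₁ μ₂ σ : ℝ) (hσ : 0 < σ) (x : ℝ) :
    gaussianDensity μ₁ σ x - gaussianDensity μ₂ σ x
      ≤ |μ₁ - μ₂| / (σ ^ 2 * Real.sqrt (2 * Real.pi * Real.exp 1)) := by
  have hπ := Real.pi_pos
  have hs2π : 0 < Real.sqrt (2 * Real.pi) := Real.sqrt_pos.2 (by positivity)
  set c : ℝ := 1 / (σ * Real.sqrt (2 * Real.pi)) with hc
  have hcpos : 0 < c := by positivity
  have hrw : ∀ μ : ℝ, -(x - μ) ^ 2 / (2 * σ ^ 2) = -((x - μ)/σ) ^ 2 / 2 := by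
    intro μ; ring
  have h1 := gauss_lip ((x - μ₁)/σ) ((x - μ₂)/σ)
  have habs : |(x - μ₁)/σ - (x - μ₂)/σ| = |μ₁ - μ₂| / σ := by
    rw [div_sub_div_same, abs_div, abs_of_pos hσ]
    congr 1
    rw [show x - μ₁ - (x - μ₂) = -(μ₁ - μ₂) by ring, abs_neg]
  have hmain : gaussianDensity μ₁ σ x - gaussianDensity μ₂ σ x
      ≤ c * (Real.exp (-(1:ℝ)/2) * (|μ₁ - μ₂| / σ)) := by
    unfold gaussianDensity
    rw [hrw μ₁, hrw μ₂, ← hc, ← mul_sub]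
    rw [habs] at h1
    exact mul_le_mul_of_nonneg_left h1 hcpos.le
  refine hmain.trans (le_of_eq ?_)
  have hsqrt : Real.sqrt (2 * Real.pi * Real.exp 1)
      = Real.sqrt (2 * Real.pi) * Real.exp ((1:ℝ)/2) := by
    rw [Real.sqrt_mul (by positivity), show Real.exp 1 = Real.exp ((1:ℝ)/2) ^ 2 by
      rw [← Real.exp_nat_mul]; norm_num, Real.sqrt_sq (Real.exp_pos _).le]
  rw [hsqrt, hc]
  have he : Real.exp (-(1:ℝ)/2) = (Real.exp ((1:ℝ)/2))⁻¹ := by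
    rw [← Real.exp_neg]; norm_num
  rw [he]
  ring
end

section
/- Tabular MDP mixture class: let 𝒳 and 𝒜 be finite sets, let {r_H(·|x',a') : (x',a') ∈ 𝒳×𝒜} be a fixed family of probability densities on [0,1] with r_∞ := max_{x',a'} ‖r_H(·|x',a')‖_∞, and let ℱ = { f : f(·|x,a) = Σ_{(x',a')∈𝒳×𝒜} w_{x,a}(x',a') r_H(·|x',a'), where each w_{x,a} ∈ Δ(|𝒳||𝒜|) is a probability weight vector } be the class of conditional mixtures indexed by weight matrices (w_{x,a})_{(x,a)∈𝒳×𝒜}. Then for every ε > 0, N_[]( ε r_∞ |𝒳||𝒜|, ℱ, ‖·‖_∞ ) ≤ N_[]( ε, (Δ(|𝒳||𝒜|))^{|𝒳||𝒜|}, ‖·‖_∞ ); consequently log N_[](ε, ℱ, ‖·‖_∞) = O( |𝒳|²|𝒜|² log( r_∞ |𝒳||𝒜| / ε ) ). -/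
open MeasureTheory ENNReal

/-- Bracketing number (w.r.t. the sup norm) of a class `F` of conditional densities
`α → β → ℝ`: the minimal number of `ε`-brackets `[l, u]` (i.e. `sup |u − l| ≤ ε`)
needed to cover `F`. -/
noncomputable def bracketingNumber {α β : Type*} (F : Set (α → β → ℝ)) (ε : ℝ) : ℝ≥0∞ :=
  ⨅ (k : ℕ) (_ : ∃ B : Fin k → (α → β → ℝ) × (α → β → ℝ),
      (∀ j, ∀ x y, |(B j).2 x y - (B j).1 x y| ≤ ε) ∧
      ∀ f ∈ F, ∃ j, ∀ x y, (B j).1 x y ≤ f x y ∧ f x y ≤ (B j).2 x y), (k : ℝ≥0∞)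

/-- **Lemma B.4 (complexity of the tabular mixture class).** Let `𝒳, 𝒜` be finite, let
`{r_H(·|x',a')}` be a family of probability densities on `[0,1]` bounded by `r_∞`, let `ℱ`
be the class of conditional mixtures `f(·|x,a) = Σ_{x',a'} w_{x,a}(x',a') r_H(·|x',a')`
with probability weight vectors `w_{x,a}`, and let `Δ^{|𝒳||𝒜|}` be the corresponding
product of simplices.  Then for every `ε > 0`,
`N_[](ε r_∞|𝒳||𝒜|, ℱ, ‖·‖_∞) ≤ N_[](ε, (Δ(|𝒳||𝒜|))^{|𝒳||𝒜|}, ‖·‖_∞)`; consequently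
`log N_[](ε, ℱ, ‖·‖_∞) = O(|𝒳|²|𝒜|² log(r_∞|𝒳||𝒜|/ε))`. -/
theorem tabular_mixture_class_bracketing
    {X A : Type*} [Fintype X] [Fintype A] [Nonempty X] [Nonempty A]
    (rH : X × A → ℝ → ℝ)
    (hnn : ∀ sa z, 0 ≤ rH sa z)
    (hsupp : ∀ sa z, z ∉ Set.Icc (0 : ℝ) 1 → rH sa z = 0)
    (hdens : ∀ sa, ∫ z, rH sa z = 1)
    (rinf : ℝ) (hrinf : ∀ sa z, rH sa z ≤ rinf)
    (F : Set ((X × A) → ℝ → ℝ))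
    (hF : F = {f | ∃ w : X × A → (X × A) → ℝ,
        (∀ sa, (∀ sa', 0 ≤ w sa sa') ∧ ∑ sa', w sa sa' = 1) ∧
        ∀ sa z, f sa z = ∑ sa', w sa sa' * rH sa' z})
    (SimplexProd : Set ((X × A) → (X × A) → ℝ))
    (hS : SimplexProd = {w | ∀ sa, (∀ sa', 0 ≤ w sa sa') ∧ ∑ sa', w sa sa' = 1}) :
    (∀ ε : ℝ, 0 < ε →
      bracketingNumber F (ε * rinf * (Fintype.card X) * (Fintype.card A))
        ≤ bracketingNumber SimplexProd ε) ∧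
    ∃ c : ℝ, 0 < c ∧ ∀ ε : ℝ, 0 < ε → ε ≤ 1 →
      Real.log (bracketingNumber F ε).toReal
        ≤ c * (Fintype.card X) ^ 2 * (Fintype.card A) ^ 2 *
            Real.log (rinf * (Fintype.card X) * (Fintype.card A) / ε) := by
  classical
  have hd : 0 < Fintype.card (X × A) := Fintype.card_pos
  set d := Fintype.card (X × A) with hd_def
  -- `rinf ≥ 1` since each `rH sa` is a density on `[0,1]` bounded by `rinf`
  have hrinf1 : (1 : ℝ) ≤ rinf := by
    obtain ⟨sa⟩ : Nonempty (X × A) := inferInstance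
    have hint : Integrable (fun z => rH sa z) := by
      by_contra h
      have := hdens sa
      rw [MeasureTheory.integral_undef h] at this
      norm_num at this
    have hindint : Integrable ((Set.Icc (0:ℝ) 1).indicator (fun _ => rinf)) := by
      rw [integrable_indicator_iff measurableSet_Icc]
      refine integrableOn_const ?_
      simp [Real.volume_Icc]
    have hmono : ∫ z, rH sa z ≤ ∫ z, (Set.Icc (0:ℝ) 1).indicator (fun _ => rinf) z := by
      refine integral_mono hint hindint ?_
      intro z
      by_cases hz : z ∈ Set.Icc (0:ℝ) 1
      · simpa [Set.indicator_of_mem hz] using hrinf sa z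
      · simp [Set.indicator_of_notMem hz, hsupp sa z hz]
    rw [hdens sa, integral_indicator measurableSet_Icc, setIntegral_const,
      Real.volume_real_Icc] at hmono
    simpa using hmono
  have hrpos : (0:ℝ) < rinf := lt_of_lt_of_le one_pos hrinf1
  have hdpos : (0:ℝ) < (d:ℝ) := by exact_mod_cast hd
  -- Part 1: transfer of brackets from the product of simplices to `F`.
  have key : ∀ ε : ℝ, 0 < ε →
      bracketingNumber F (ε * rinf * (Fintype.card X) * (Fintype.card A))
        ≤ bracketingNumber SimplexProd ε := by
    intro ε hε
    unfold bracketingNumber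
    refine le_iInf fun k => le_iInf fun hk => ?_
    obtain ⟨B, hB1, hB2⟩ := hk
    refine iInf₂_le k ⟨fun j => (fun sa z => ∑ sa', (B j).1 sa sa' * rH sa' z,
                                 fun sa z => ∑ sa', (B j).2 sa sa' * rH sa' z), ?_, ?_⟩
    · intro j sa z
      rw [← Finset.sum_sub_distrib]
      calc |∑ sa', ((B j).2 sa sa' * rH sa' z - (B j).1 sa sa' * rH sa' z)|
          ≤ ∑ sa', |(B j).2 sa sa' * rH sa' z - (B j).1 sa sa' * rH sa' z| :=
            Finset.abs_sum_le_sum_abs _ _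
        _ ≤ ∑ _sa' : X × A, ε * rinf := by
            refine Finset.sum_le_sum fun sa' _ => ?_
            rw [← sub_mul, abs_mul, abs_of_nonneg (hnn sa' z)]
            exact mul_le_mul (hB1 j sa sa') (hrinf sa' z) (hnn sa' z) hε.le
        _ = ε * rinf * (Fintype.card X) * (Fintype.card A) := by
            rw [Finset.sum_const, Finset.card_univ, nsmul_eq_mul, Fintype.card_prod]
            push_cast; ring
    · intro f hf
      rw [hF] at hf
      obtain ⟨w, hw, hfw⟩ := hf
      have hwS : w ∈ SimplexProd := by rw [hS]; exact hw
      obtain ⟨j, hj⟩ := hB2 w hwS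
      refine ⟨j, fun sa z => ?_⟩
      rw [hfw sa z]
      exact ⟨Finset.sum_le_sum fun sa' _ =>
          mul_le_mul_of_nonneg_right ((hj sa sa').1) (hnn sa' z),
        Finset.sum_le_sum fun sa' _ =>
          mul_le_mul_of_nonneg_right ((hj sa sa').2) (hnn sa' z)⟩
  refine ⟨key, 2, two_pos, ?_⟩
  -- Part 2: explicit counting bound.
  have count : ∀ ε : ℝ, 0 < ε →
      bracketingNumber F ε
        ≤ ((Nat.floor ((d:ℝ) * rinf / ε) + 1) ^ (d * d) : ℕ) := by
    intro ε hε
    set δ : ℝ := ε / ((d:ℝ) * rinf) with hδ_def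
    have hδpos : 0 < δ := div_pos hε (mul_pos hdpos hrpos)
    set n : ℕ := Nat.floor ((d:ℝ) * rinf / ε) with hn_def
    have hcardI : Fintype.card ((X × A) → (X × A) → Fin (n+1)) = (n+1) ^ (d * d) := by
      rw [Fintype.card_fun, Fintype.card_fun, Fintype.card_fin, ← pow_mul, hd_def]
    set e := Fintype.equivFin ((X × A) → (X × A) → Fin (n+1)) with he_def
    have hmain : bracketingNumber F ε
        ≤ (Fintype.card ((X × A) → (X × A) → Fin (n+1)) : ℝ≥0∞) := by
      unfold bracketingNumber
      refine iInf₂_le _ ⟨fun j =>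
        (fun sa z => ∑ sa', ((e.symm j sa sa' : ℕ) : ℝ) * δ * rH sa' z,
         fun sa z => ∑ sa', (((e.symm j sa sa' : ℕ) : ℝ) * δ + δ) * rH sa' z), ?_, ?_⟩
      · intro j sa z
        rw [← Finset.sum_sub_distrib]
        have h1 : ∀ sa' : X × A,
            (((e.symm j sa sa' : ℕ) : ℝ) * δ + δ) * rH sa' z
              - ((e.symm j sa sa' : ℕ) : ℝ) * δ * rH sa' z = δ * rH sa' z := by
          intro sa'; ring
        calc |∑ sa', ((((e.symm j sa sa' : ℕ) : ℝ) * δ + δ) * rH sa' z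
                - ((e.symm j sa sa' : ℕ) : ℝ) * δ * rH sa' z)|
            = |∑ sa' : X × A, δ * rH sa' z| := by
              congr 1; exact Finset.sum_congr rfl fun sa' _ => h1 sa'
          _ = ∑ sa' : X × A, δ * rH sa' z := by
              rw [abs_of_nonneg]
              exact Finset.sum_nonneg fun sa' _ => mul_nonneg hδpos.le (hnn sa' z)
          _ ≤ ∑ _sa' : X × A, δ * rinf := by
              exact Finset.sum_le_sum fun sa' _ =>
                mul_le_mul_of_nonneg_left (hrinf sa' z) hδpos.le
          _ = ε := by
              rw [Finset.sum_const, Finset.card_univ, nsmul_eq_mul, ← hd_def, hδ_def]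
              field_simp
      · intro f hf
        rw [hF] at hf
        obtain ⟨w, hw, hfw⟩ := hf
        have hw01 : ∀ sa sa', 0 ≤ w sa sa' ∧ w sa sa' ≤ 1 := by
          intro sa sa'
          refine ⟨(hw sa).1 sa', ?_⟩
          calc w sa sa' ≤ ∑ sa'', w sa sa'' :=
                Finset.single_le_sum (fun i _ => (hw sa).1 i) (Finset.mem_univ sa')
            _ = 1 := (hw sa).2
        have hfloor : ∀ sa sa', Nat.floor (w sa sa' / δ) < n + 1 := by
          intro sa sa'
          have h1 : w sa sa' / δ ≤ (d:ℝ) * rinf / ε := by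
            rw [div_le_iff₀ hδpos, hδ_def]
            calc w sa sa' ≤ 1 := (hw01 sa sa').2
              _ = (d:ℝ) * rinf / ε * (ε / ((d:ℝ) * rinf)) := by
                  field_simp
          exact Nat.lt_succ_of_le (Nat.floor_mono h1)
        set g : (X × A) → (X × A) → Fin (n+1) :=
          fun sa sa' => ⟨Nat.floor (w sa sa' / δ), hfloor sa sa'⟩ with hg_def
        refine ⟨e g, fun sa z => ?_⟩
        simp only [hfw sa z, Equiv.symm_apply_apply]
        constructor
        · refine Finset.sum_le_sum fun sa' _ => ?_
          refine mul_le_mul_of_nonneg_right ?_ (hnn sa' z)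
          have := Nat.floor_le (div_nonneg (hw01 sa sa').1 hδpos.le)
          calc ((g sa sa' : ℕ) : ℝ) * δ ≤ (w sa sa' / δ) * δ := by
                refine mul_le_mul_of_nonneg_right ?_ hδpos.le
                simpa [hg_def] using this
            _ = w sa sa' := div_mul_cancel₀ _ hδpos.ne'
        · refine Finset.sum_le_sum fun sa' _ => ?_
          refine mul_le_mul_of_nonneg_right ?_ (hnn sa' z)
          have h2 : w sa sa' / δ < ((g sa sa' : ℕ) : ℝ) + 1 := by
            simpa [hg_def] using Nat.lt_floor_add_one (w sa sa' / δ)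
          have h3 : w sa sa' < (((g sa sa' : ℕ) : ℝ) + 1) * δ := by
            have := mul_lt_mul_of_pos_right h2 hδpos
            rwa [div_mul_cancel₀ _ hδpos.ne'] at this
          nlinarith
    calc bracketingNumber F ε ≤ _ := hmain
      _ = (((n+1) ^ (d * d) : ℕ) : ℝ≥0∞) := by rw [hcardI]
  intro ε hε hε1
  by_cases hd1 : d = 1
  · -- `F` is a singleton: one exact bracket suffices.
    have hsub : Subsingleton (X × A) :=
      Fintype.card_le_one_iff_subsingleton.mp (le_of_eq hd1)
    have hN : bracketingNumber F ε ≤ 1 := by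
      unfold bracketingNumber
      refine le_trans (iInf₂_le 1 ⟨fun _ => (fun sa z => rH sa z, fun sa z => rH sa z),
        ?_, ?_⟩) (by norm_num)
      · intro j sa z; simp [hε.le]
      · intro f hf
        rw [hF] at hf
        obtain ⟨w, hw, hfw⟩ := hf
        refine ⟨0, fun sa z => ?_⟩
        have hsum : ∀ (v : (X × A) → ℝ), ∑ sa', v sa' = v sa := fun v =>
          Finset.sum_eq_single_of_mem sa (Finset.mem_univ sa)
            (fun b _ hb => absurd (Subsingleton.elim b sa) hb)
        have hw1 : w sa sa = 1 := by
          have := (hw sa).2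
          rwa [hsum (w sa)] at this
        have : f sa z = rH sa z := by
          rw [hfw sa z, hsum (fun sa' => w sa sa' * rH sa' z), hw1, one_mul]
        rw [this]
        exact ⟨le_rfl, le_rfl⟩
    have htr : (bracketingNumber F ε).toReal ≤ 1 := by
      simpa using ENNReal.toReal_mono one_ne_top hN
    have hlog : Real.log (bracketingNumber F ε).toReal ≤ 0 :=
      Real.log_nonpos ENNReal.toReal_nonneg htr
    refine hlog.trans ?_
    have ht1 : 1 ≤ rinf * (Fintype.card X) * (Fintype.card A) / ε := by
      rw [le_div_iff₀ hε]
      have hcard : (1:ℝ) ≤ (Fintype.card X : ℝ) * (Fintype.card A : ℝ) := by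
        have : (1:ℕ) ≤ Fintype.card X * Fintype.card A := by
          rw [← Fintype.card_prod]; omega
        exact_mod_cast this
      nlinarith
    have := Real.log_nonneg ht1
    positivity
  · have hd2 : 2 ≤ d := by omega
    have hd2' : (2:ℝ) ≤ (d:ℝ) := by exact_mod_cast hd2
    set t : ℝ := rinf * (Fintype.card X) * (Fintype.card A) / ε with ht_def
    have hdt : t = (d:ℝ) * rinf / ε := by
      rw [ht_def, hd_def, Fintype.card_prod]; push_cast; ring
    have ht2 : 2 ≤ t := by
      rw [hdt, le_div_iff₀ hε]
      nlinarith
    have ht0 : 0 < t := lt_of_lt_of_le two_pos ht2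
    set n : ℕ := Nat.floor ((d:ℝ) * rinf / ε) with hn_def
    have hNle := count ε hε
    have htoReal : (bracketingNumber F ε).toReal ≤ (((n+1) ^ (d * d) : ℕ) : ℝ) := by
      have := ENNReal.toReal_mono (ENNReal.natCast_ne_top _) hNle
      rwa [ENNReal.toReal_natCast] at this
    have hn_le : ((n:ℝ) + 1) ≤ t + 1 := by
      have : (n:ℝ) ≤ (d:ℝ) * rinf / ε := Nat.floor_le (by positivity)
      rw [hdt]; linarith
    have hcast : (((n+1) ^ (d * d) : ℕ) : ℝ) = ((n:ℝ) + 1) ^ (d * d) := by push_cast; ring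
    have hlog1 : Real.log (bracketingNumber F ε).toReal
        ≤ Real.log (((n:ℝ) + 1) ^ (d * d)) := by
      rcases le_or_gt (bracketingNumber F ε).toReal 0 with h | h
      · refine (Real.log_nonpos ENNReal.toReal_nonneg (h.trans zero_le_one)).trans ?_
        refine Real.log_nonneg ?_
        have h1 : (1:ℝ) ≤ (n:ℝ) + 1 := by
          have := Nat.cast_nonneg (α := ℝ) n; linarith
        exact one_le_pow₀ h1
      · rw [← hcast]; exact Real.log_le_log h htoReal
    have hlog2 : Real.log (((n:ℝ) + 1) ^ (d * d)) = (d * d : ℕ) * Real.log ((n:ℝ) + 1) :=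
      Real.log_pow _ _
    have hlog3 : Real.log ((n:ℝ) + 1) ≤ 2 * Real.log t := by
      have h1 : Real.log ((n:ℝ) + 1) ≤ Real.log (t + 1) :=
        Real.log_le_log (by positivity) hn_le
      have h2 : Real.log (t + 1) ≤ Real.log (2 * t) :=
        Real.log_le_log (by linarith) (by linarith)
      have h3 : Real.log (2 * t) = Real.log 2 + Real.log t :=
        Real.log_mul two_ne_zero ht0.ne'
      have h4 : Real.log 2 ≤ Real.log t := Real.log_le_log two_pos ht2
      linarith
    have hdd : ((d * d : ℕ) : ℝ) = (Fintype.card X : ℝ) ^ 2 * (Fintype.card A : ℝ) ^ 2 := by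
      rw [hd_def, Fintype.card_prod]; push_cast; ring
    have hddnn : (0:ℝ) ≤ ((d * d : ℕ) : ℝ) := by positivity
    calc Real.log (bracketingNumber F ε).toReal
        ≤ ((d * d : ℕ) : ℝ) * Real.log ((n:ℝ) + 1) := by rw [← hlog2]; exact hlog1
      _ ≤ ((d * d : ℕ) : ℝ) * (2 * Real.log t) :=
          mul_le_mul_of_nonneg_left hlog3 hddnn
      _ = 2 * (Fintype.card X) ^ 2 * (Fintype.card A) ^ 2 * Real.log t := by
          rw [hdd]; ring
end
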